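/- arXiv:2605.00044 — 8 statements merged into one kernel-verified Lean document; each statement's English description precedes it below -/
import Mathlib

section
/- For any finite simple graph G and any non-edge e (a pair of distinct non-adjacent vertices), HM(G + e) > HM(G), where G + e denotes the graph obtained by adding the edge e. -/
open scoped Classical

/-- The hyper-Zagreb index: `HM(G) = Σ_{uv ∈ E(G)} (d(u)+d(v))²`. -/
noncomputable def hyperZagreb {V : Type*} [Fintype V] (G : SimpleGraph V) : ℕ := by
  classical
  exact ∑ e ∈ G.edgeFinset,
    Sym2.lift ⟨fun u v => (G.degree u + G.degree v) ^ 2, fun u v => by simp [add_comm]⟩ e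

private lemma degree_irrel {V : Type*} (G : SimpleGraph V) (v : V)
    (i1 i2 : Fintype (G.neighborSet v)) :
    @SimpleGraph.degree V G v i1 = @SimpleGraph.degree V G v i2 := by congr!

private lemma edgeFinset_irrel {V : Type*} (G : SimpleGraph V)
    (i1 i2 : Fintype G.edgeSet) :
    @SimpleGraph.edgeFinset V G i1 = @SimpleGraph.edgeFinset V G i2 := by congr!

/-- `hyperZagreb` agrees with the sum formula for any choice of instances. -/
private lemma hyperZagreb_eq {V : Type*} [Fintype V] (G : SimpleGraph V)
    [Fintype G.edgeSet] [∀ w, Fintype (G.neighborSet w)] :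
    hyperZagreb G = ∑ e ∈ G.edgeFinset,
      Sym2.lift ⟨fun u v => (G.degree u + G.degree v) ^ 2, fun u v => by simp [add_comm]⟩ e := by
  unfold hyperZagreb
  rw [edgeFinset_irrel]
  refine Finset.sum_congr rfl fun e _ => ?_
  induction e using Sym2.ind with
  | _ a b =>
    simp only [Sym2.lift_mk]
    rw [degree_irrel G a, degree_irrel G b]

private lemma degree_mono' {V : Type*} {G H : SimpleGraph V} (h : G ≤ H) (v : V)
    [Fintype (G.neighborSet v)] [Fintype (H.neighborSet v)] :
    G.degree v ≤ H.degree v := by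
  apply Finset.card_le_card
  intro w hw
  simp only [SimpleGraph.mem_neighborFinset] at *
  exact h hw

private lemma hz_key {V : Type*} (G H : SimpleGraph V)
    [Fintype G.edgeSet] [Fintype H.edgeSet]
    [∀ w, Fintype (G.neighborSet w)] [∀ w, Fintype (H.neighborSet w)]
    (hle : G ≤ H) (u v : V) (hadj : H.Adj u v) (h : ¬ G.Adj u v) :
    ∑ e ∈ G.edgeFinset,
      Sym2.lift ⟨fun a b => (G.degree a + G.degree b) ^ 2, fun a b => by simp [add_comm]⟩ e <
    ∑ e ∈ H.edgeFinset,
      Sym2.lift ⟨fun a b => (H.degree a + H.degree b) ^ 2, fun a b => by simp [add_comm]⟩ e := by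
  refine lt_of_le_of_lt (Finset.sum_le_sum ?_)
    (Finset.sum_lt_sum_of_subset ?_ (i := s(u, v)) ?_ ?_ ?_ ?_)
  · intro e _
    induction e using Sym2.ind with
    | _ a b =>
      simp only [Sym2.lift_mk]
      gcongr <;> exact degree_mono' hle _
  · intro e he
    rw [SimpleGraph.mem_edgeFinset] at *
    exact SimpleGraph.edgeSet_mono hle he
  · rw [SimpleGraph.mem_edgeFinset]
    exact hadj
  · rw [SimpleGraph.mem_edgeFinset]
    exact h
  · simp only [Sym2.lift_mk]
    refine pow_pos (Nat.add_pos_left ?_ _) 2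
    rw [SimpleGraph.degree_pos_iff_exists_adj]
    exact ⟨v, hadj⟩
  · intro j _ _
    exact Nat.zero_le _

/-- Adding an edge strictly increases the hyper-Zagreb index. -/
theorem hyperZagreb_lt_addEdge {V : Type*} [Fintype V] (G : SimpleGraph V) (u v : V)
    (hne : u ≠ v) (h : ¬ G.Adj u v) :
    hyperZagreb G < hyperZagreb (G ⊔ SimpleGraph.fromEdgeSet {s(u, v)}) := by
  rw [hyperZagreb_eq G, hyperZagreb_eq (G ⊔ SimpleGraph.fromEdgeSet {s(u, v)})]
  exact hz_key G _ le_sup_left u v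
    (Or.inr ((SimpleGraph.fromEdgeSet_adj _).mpr ⟨rfl, hne⟩)) h
end

section
/- Let G be a simple graph of order n with independence number β. Then HM(G) ≤ 2(n-β)(n-β-1)(n-1)^2 + β(n-β)(2n-β-1)^2, with equality if and only if G is isomorphic to the split graph SP(n,β), the join of K_{n-β} with β isolated vertices. -/
open scoped Classical

/-- The split graph `SP(n,β)`: a clique on the first `n-β` vertices, each of
which is adjacent to all of the remaining `β` independent vertices. -/
def splitGraph (n β : ℕ) : SimpleGraph (Fin n) where
  Adj i j := i ≠ j ∧ ((i : ℕ) < n - β ∨ (j : ℕ) < n - β)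
  symm := by
    constructor
    intro i j ⟨h1, h2⟩
    exact ⟨h1.symm, h2.symm⟩
  loopless := by
    constructor
    intro i hi
    exact hi.1 rfl

open Finset SimpleGraph

section Aux
variable {V : Type*} [Fintype V]

private lemma hz_def (G : SimpleGraph V) : hyperZagreb G = ∑ e ∈ G.edgeFinset,
    Sym2.lift ⟨fun u v => (G.degree u + G.degree v) ^ 2, fun u v => by simp [add_comm]⟩ e := rfl

private lemma my_degree_mono {G H : SimpleGraph V} (h : G ≤ H) (v : V) :
    G.degree v ≤ H.degree v := by
  classical
  rw [← card_neighborFinset_eq_degree, ← card_neighborFinset_eq_degree]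
  apply Finset.card_le_card
  intro w hw
  rw [mem_neighborFinset] at hw ⊢
  exact h hw

private lemma hz_mono {G H : SimpleGraph V} (h : G ≤ H) : hyperZagreb G ≤ hyperZagreb H := by
  classical
  rw [hz_def, hz_def]
  calc ∑ e ∈ G.edgeFinset,
      Sym2.lift ⟨fun u v => (G.degree u + G.degree v) ^ 2, fun u v => by simp [add_comm]⟩ e
      ≤ ∑ e ∈ G.edgeFinset,
      Sym2.lift ⟨fun u v => (H.degree u + H.degree v) ^ 2, fun u v => by simp [add_comm]⟩ e := by
        apply Finset.sum_le_sum
        intro e he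
        induction e with
        | _ u v =>
          simp only [Sym2.lift_mk]
          exact Nat.pow_le_pow_left (Nat.add_le_add (my_degree_mono h u) (my_degree_mono h v)) 2
    _ ≤ _ := Finset.sum_le_sum_of_subset (edgeFinset_mono h)

private lemma hz_eq_of_le {G H : SimpleGraph V} (h : G ≤ H)
    (he : hyperZagreb H ≤ hyperZagreb G) : G = H := by
  classical
  by_contra hne
  have hlt : G.edgeFinset ⊂ H.edgeFinset := edgeFinset_ssubset_edgeFinset.2 (h.lt_of_ne hne)
  have hstrict : hyperZagreb G < hyperZagreb H := by
    rw [hz_def, hz_def]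
    obtain ⟨e0, he0t, he0s⟩ := Finset.exists_of_ssubset hlt
    calc ∑ e ∈ G.edgeFinset,
        Sym2.lift ⟨fun u v => (G.degree u + G.degree v) ^ 2, fun u v => by simp [add_comm]⟩ e
        ≤ ∑ e ∈ G.edgeFinset,
        Sym2.lift ⟨fun u v => (H.degree u + H.degree v) ^ 2, fun u v => by simp [add_comm]⟩ e := by
          apply Finset.sum_le_sum
          intro e he
          induction e with
          | _ u v =>
            simp only [Sym2.lift_mk]
            exact Nat.pow_le_pow_left (Nat.add_le_add (my_degree_mono h u) (my_degree_mono h v)) 2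
      _ < _ := by
          apply Finset.sum_lt_sum_of_subset hlt.subset he0t he0s
          · induction e0 with
            | _ u v =>
              simp only [Sym2.lift_mk]
              rw [mem_edgeFinset, mem_edgeSet] at he0t
              have h1 : 0 < H.degree u := by
                rw [H.degree_pos_iff_exists_adj]; exact ⟨v, he0t⟩
              positivity
          · intro j _ _; exact Nat.zero_le _
  omega

private lemma hz_iso {W : Type*} [Fintype W] {G : SimpleGraph V} {H : SimpleGraph W}
    (f : G ≃g H) : hyperZagreb G = hyperZagreb H := by
  classical
  have hdeg : ∀ v, H.degree (f v) = G.degree v := fun v => by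
    rw [← card_neighborSet_eq_degree, ← card_neighborSet_eq_degree]
    exact (Fintype.card_congr (f.mapNeighborSet v)).symm
  rw [hz_def, hz_def]
  refine Finset.sum_nbij' (fun e => e.map f) (fun e => e.map f.symm) ?_ ?_ ?_ ?_ ?_
  · intro e he
    rw [mem_edgeFinset] at he ⊢
    exact f.map_mem_edgeSet_iff.2 he
  · intro e he
    rw [mem_edgeFinset] at he ⊢
    exact f.symm.map_mem_edgeSet_iff.2 he
  · intro e _
    simp [Sym2.map_map, Function.comp]
  · intro e _
    simp [Sym2.map_map, Function.comp]
  · intro e _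
    induction e with
    | _ u v => simp [hdeg]

private lemma two_hz (G : SimpleGraph V) :
    ∑ u, ∑ v ∈ G.neighborFinset u, (G.degree u + G.degree v) ^ 2 = 2 * hyperZagreb G := by
  classical
  rw [hz_def]
  set w : G.Dart → ℕ := fun d => (G.degree d.fst + G.degree d.snd) ^ 2 with hw
  have stepA : ∑ d : G.Dart, w d
      = ∑ u, ∑ v ∈ G.neighborFinset u, (G.degree u + G.degree v) ^ 2 := by
    rw [← Finset.sum_fiberwise (univ : Finset G.Dart) (fun d => d.fst) w]
    refine Finset.sum_congr rfl fun u _ => ?_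
    have : (univ.filter fun d : G.Dart => d.fst = u) = univ.image (G.dartOfNeighborSet u) :=
      G.dart_fst_fiber u
    rw [this, Finset.sum_image (fun x _ y _ h => G.dartOfNeighborSet_injective u h)]
    rw [SimpleGraph.neighborFinset_def, ← Finset.sum_set_coe]
    exact Finset.sum_congr rfl fun x _ => by simp [hw, SimpleGraph.dartOfNeighborSet]
  have stepB : ∑ d : G.Dart, w d = 2 * ∑ e ∈ G.edgeFinset,
      Sym2.lift ⟨fun u v => (G.degree u + G.degree v) ^ 2, fun u v => by simp [add_comm]⟩ e := by
    rw [Finset.mul_sum]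
    rw [← Finset.sum_fiberwise_of_maps_to (g := fun d : G.Dart => d.edge) (t := G.edgeFinset)
      (fun d _ => by rw [mem_edgeFinset]; exact d.edge_mem) w]
    refine Finset.sum_congr rfl fun e he => ?_
    rw [mem_edgeFinset] at he
    induction e with
    | _ u v =>
      set d : G.Dart := ⟨(u, v), he⟩ with hd
      have hfib : (univ.filter fun d' : G.Dart => d'.edge = s(u,v)) = {d, d.symm} := by
        have := d.edge_fiber
        exact this
      rw [hfib, Finset.sum_pair d.symm_ne.symm]
      simp only [Sym2.lift_mk, hw]
      simp [Dart.symm, d, add_comm, two_mul]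
      congr
  rw [← stepA, stepB]

end Aux

private lemma card_filter_lt (n k : ℕ) (h : k ≤ n) :
    #(univ.filter fun i : Fin n => (i : ℕ) < k) = k := by
  have : (univ.filter fun i : Fin n => (i : ℕ) < k) =
      (Finset.range k).attachFin (fun m hm => lt_of_lt_of_le (Finset.mem_range.1 hm) h) := by
    ext i
    simp [Finset.mem_attachFin]
  rw [this, Finset.card_attachFin, Finset.card_range]

private lemma split_nb_lt {n β : ℕ} {i : Fin n} (hi : (i : ℕ) < n - β) :
    (splitGraph n β).neighborFinset i = univ.erase i := by
  ext j
  simp only [mem_neighborFinset, Finset.mem_erase, Finset.mem_univ, and_true]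
  constructor
  · rintro ⟨h1, _⟩; exact h1.symm
  · intro h; exact ⟨Ne.symm h, Or.inl hi⟩

private lemma split_nb_ge {n β : ℕ} {i : Fin n} (hi : ¬ (i : ℕ) < n - β) :
    (splitGraph n β).neighborFinset i = univ.filter fun j : Fin n => (j : ℕ) < n - β := by
  ext j
  simp only [mem_neighborFinset, Finset.mem_filter, Finset.mem_univ, true_and]
  constructor
  · rintro ⟨h1, h2⟩; exact h2.resolve_left hi
  · intro h
    refine ⟨fun hij => hi (hij ▸ h), Or.inr h⟩

private lemma split_deg_lt {n β : ℕ} {i : Fin n} (hi : (i : ℕ) < n - β) :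
    (splitGraph n β).degree i = n - 1 := by
  rw [← card_neighborFinset_eq_degree, split_nb_lt hi, Finset.card_erase_of_mem (mem_univ i),
    Finset.card_univ, Fintype.card_fin]

private lemma split_deg_ge {n β : ℕ} {i : Fin n} (hi : ¬ (i : ℕ) < n - β) :
    (splitGraph n β).degree i = n - β := by
  rw [← card_neighborFinset_eq_degree, split_nb_ge hi, card_filter_lt n (n - β) (Nat.sub_le n β)]

private lemma split_sum (n β : ℕ) (hβ : β ≤ n) :
    ∑ u, ∑ v ∈ (splitGraph n β).neighborFinset u,
        ((splitGraph n β).degree u + (splitGraph n β).degree v) ^ 2 =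
      2 * (2 * (n - β) * (n - β - 1) * (n - 1) ^ 2 + β * (n - β) * (2 * n - β - 1) ^ 2) := by
  classical
  set G := splitGraph n β with hG
  set P : Fin n → Prop := fun i : Fin n => (i : ℕ) < n - β with hP
  set A : Finset (Fin n) := univ.filter P with hA
  set B : Finset (Fin n) := univ.filter (fun i => ¬ P i) with hB
  have hcardA : #A = n - β := card_filter_lt n (n - β) (Nat.sub_le n β)
  have hcardB : #B = β := by
    have h := Finset.card_filter_add_card_filter_not
      (s := (univ : Finset (Fin n))) (p := P)
    rw [← hA, ← hB, hcardA, Finset.card_univ, Fintype.card_fin] at h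
    omega
  have inner_A : ∀ u ∈ A, (∑ v ∈ G.neighborFinset u, (G.degree u + G.degree v) ^ 2)
      = (n - β - 1) * ((n - 1) + (n - 1)) ^ 2 + β * ((n - 1) + (n - β)) ^ 2 := by
    intro u hu
    have hu' : (u : ℕ) < n - β := (Finset.mem_filter.1 hu).2
    rw [split_nb_lt hu', split_deg_lt hu',
      ← Finset.sum_filter_add_sum_filter_not (univ.erase u) P]
    congr 1
    · have hset : (univ.erase u).filter P = A.erase u := by
        rw [hA, Finset.filter_erase]
      rw [hset]
      have hc : ∀ v ∈ A.erase u, ((n - 1) + G.degree v) ^ 2 = ((n - 1) + (n - 1)) ^ 2 := by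
        intro v hv
        have hv' : P v := (Finset.mem_filter.1 (Finset.mem_erase.1 hv).2).2
        rw [split_deg_lt hv']
      rw [Finset.sum_congr rfl hc, Finset.sum_const,
        Finset.card_erase_of_mem hu, hcardA, smul_eq_mul]
    · have hset : (univ.erase u).filter (fun j => ¬ P j) = B := by
        rw [hB, Finset.filter_erase, Finset.erase_eq_of_notMem]
        intro hmem
        exact (Finset.mem_filter.1 hmem).2 hu'
      rw [hset]
      have hc : ∀ v ∈ B, ((n - 1) + G.degree v) ^ 2 = ((n - 1) + (n - β)) ^ 2 := by
        intro v hv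
        have hv' : ¬ P v := (Finset.mem_filter.1 hv).2
        rw [split_deg_ge hv']
      rw [Finset.sum_congr rfl hc, Finset.sum_const, hcardB, smul_eq_mul]
  have inner_B : ∀ u ∈ B, (∑ v ∈ G.neighborFinset u, (G.degree u + G.degree v) ^ 2)
      = (n - β) * ((n - β) + (n - 1)) ^ 2 := by
    intro u hu
    have hu' : ¬ P u := (Finset.mem_filter.1 hu).2
    rw [split_nb_ge hu', split_deg_ge hu', ← hA]
    have hc : ∀ v ∈ A, ((n - β) + G.degree v) ^ 2 = ((n - β) + (n - 1)) ^ 2 := by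
      intro v hv
      have hv' : P v := (Finset.mem_filter.1 hv).2
      rw [split_deg_lt hv']
    rw [Finset.sum_congr rfl hc, Finset.sum_const, hcardA, smul_eq_mul]
  rw [← Finset.sum_filter_add_sum_filter_not univ P, ← hA, ← hB,
    Finset.sum_congr rfl inner_A, Finset.sum_congr rfl inner_B,
    Finset.sum_const, Finset.sum_const, hcardA, hcardB, smul_eq_mul, smul_eq_mul]
  rcases Nat.eq_zero_or_pos (n - β) with h0 | hpos
  · simp [h0]
  · obtain ⟨a, ha⟩ : ∃ a, n - β = 1 + a := ⟨n - β - 1, by omega⟩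
    have hn1 : 1 ≤ n := le_trans hpos (Nat.sub_le n β)
    obtain ⟨m, hm⟩ : ∃ m, n - 1 = m := ⟨n - 1, rfl⟩
    have e2 : n - β - 1 = a := by omega
    have e3 : 2 * n - β - 1 = m + 1 + a := by omega
    rw [e2, e3, ha, hm]
    ring

private lemma exists_split_equiv {V : Type*} [Fintype V] (n β : ℕ)
    (hn : Fintype.card V = n) (s : Finset V) (hcard : s.card = β) :
    ∃ e : V ≃ Fin n, ∀ u : V, ((e u : ℕ) < n - β ↔ u ∉ s) := by
  classical
  have hcs : Fintype.card {x // x ∈ s} = β := by simp [hcard]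
  have hcsc : Fintype.card {x // ¬ x ∈ s} = n - β := by
    rw [Fintype.card_subtype_compl, hcs, hn]
  let e1 : {x // ¬ x ∈ s} ≃ Fin (n - β) := Fintype.equivFinOfCardEq hcsc
  let e2 : {x // x ∈ s} ≃ Fin β := Fintype.equivFinOfCardEq hcs
  have hβ : β ≤ n := by
    rw [← hcard, ← hn]
    exact (Finset.card_le_univ s).trans_eq (by simp)
  have hadd : (n - β) + β = n := by omega
  let e : V ≃ Fin n :=
    (Equiv.sumCompl (· ∈ s)).symm.trans
      ((Equiv.sumComm _ _).trans
        ((e1.sumCongr e2).trans (finSumFinEquiv.trans (finCongr hadd))))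
  refine ⟨e, fun u => ?_⟩
  by_cases hu : u ∈ s
  · simp only [e, Equiv.trans_apply, Equiv.sumCompl_symm_apply_of_pos hu,
      Equiv.sumComm_apply, Sum.swap_inl, Equiv.sumCongr_apply, Sum.map_inr,
      finSumFinEquiv_apply_right, finCongr_apply, Fin.coe_cast, Fin.coe_natAdd]
    simp [hu]
  · simp only [e, Equiv.trans_apply, Equiv.sumCompl_symm_apply_of_neg hu,
      Equiv.sumComm_apply, Sum.swap_inr, Equiv.sumCongr_apply, Sum.map_inl,
      finSumFinEquiv_apply_left, finCongr_apply, Fin.coe_cast, Fin.coe_castAdd]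
    simp [hu]

/-- If `G` has order `n` and independence number `β`, then
`HM(G) ≤ 2(n-β)(n-β-1)(n-1)² + β(n-β)(2n-β-1)²`, with equality iff `G ≅ SP(n,β)`. -/
theorem hyperZagreb_le_of_indepNum {V : Type*} [Fintype V] (G : SimpleGraph V) (n β : ℕ)
    (hn : Fintype.card V = n)
    (hex : ∃ s : Finset V, Gᶜ.IsNClique β s)
    (hmax : ∀ s : Finset V, Gᶜ.IsClique ↑s → s.card ≤ β) :
    hyperZagreb G ≤
        2 * (n - β) * (n - β - 1) * (n - 1) ^ 2 + β * (n - β) * (2 * n - β - 1) ^ 2 ∧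
      (hyperZagreb G =
          2 * (n - β) * (n - β - 1) * (n - 1) ^ 2 + β * (n - β) * (2 * n - β - 1) ^ 2 ↔
        Nonempty (G ≃g splitGraph n β)) := by
  classical
  obtain ⟨s, hsclique, hscard⟩ := hex
  have hβ : β ≤ n := by
    rw [← hscard, ← hn]
    exact (Finset.card_le_univ s).trans_eq (by simp)
  obtain ⟨e, he⟩ := exists_split_equiv n β hn s hscard
  set G' : SimpleGraph (Fin n) := G.comap e.symm.toEmbedding with hG'
  have hiso : G' ≃g G := SimpleGraph.Iso.comap e.symm G
  have hind : ∀ ⦃u v : V⦄, u ∈ s → v ∈ s → ¬ G.Adj u v := by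
    intro u v hu hv hadj
    rcases eq_or_ne u v with rfl | hne
    · exact G.loopless.irrefl u hadj
    · exact (hsclique hu hv hne).2 hadj
  have hle : G' ≤ splitGraph n β := by
    intro i j hadj
    have hadj' : G.Adj (e.symm i) (e.symm j) := hadj
    refine ⟨fun hij => G.loopless.irrefl _ (by rwa [hij] at hadj'), ?_⟩
    by_contra hcon
    push_neg at hcon
    have hi : e.symm i ∈ s := by
      have h := he (e.symm i)
      rw [Equiv.apply_symm_apply] at h
      exact not_not.1 fun hns => not_lt.2 hcon.1 (h.2 hns)
    have hj : e.symm j ∈ s := by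
      have h := he (e.symm j)
      rw [Equiv.apply_symm_apply] at h
      exact not_not.1 fun hns => not_lt.2 hcon.2 (h.2 hns)
    exact hind hi hj hadj'
  have hsplit : hyperZagreb (splitGraph n β) =
      2 * (n - β) * (n - β - 1) * (n - 1) ^ 2 + β * (n - β) * (2 * n - β - 1) ^ 2 := by
    have h2 := split_sum n β hβ
    have hdb := two_hz (splitGraph n β)
    omega
  have hGG' : hyperZagreb G = hyperZagreb G' := hz_iso hiso.symm
  refine ⟨?_, ?_, ?_⟩
  · rw [hGG', ← hsplit]
    exact hz_mono hle
  · intro heq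
    have hEq : G' = splitGraph n β :=
      hz_eq_of_le hle (le_of_eq (by rw [hsplit, ← heq, hGG']))
    have : Nonempty (G ≃g G') := ⟨hiso.symm⟩
    rwa [hEq] at this
  · rintro ⟨f⟩
    rw [hz_iso f, hsplit]
end

section
/- The hyper-Zagreb index of the split graph SP(n,β) equals 2(n-β)(n-β-1)(n-1)^2 + β(n-β)(2n-β-1)^2. -/
open scoped Classical

open Finset

section Aux

variable {V : Type*} [Fintype V] (G : SimpleGraph V)

lemma sum_dart_edge (f : Sym2 V → ℕ) :
    ∑ d : G.Dart, f d.edge = ∑ e ∈ G.edgeFinset, 2 * f e := by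
  classical
  rw [← Finset.sum_fiberwise_of_maps_to
      (g := SimpleGraph.Dart.edge) (t := G.edgeFinset)
      (fun d _ => by simp [SimpleGraph.Dart.edge_mem]) (fun d => f d.edge)]
  refine Finset.sum_congr rfl fun e he => ?_
  have h1 : ∀ d ∈ Finset.univ.filter (fun d : G.Dart => d.edge = e),
      f d.edge = f e := by
    intro d hd
    rw [(Finset.mem_filter.mp hd).2]
  rw [Finset.sum_congr rfl h1, Finset.sum_const, smul_eq_mul,
    G.dart_edge_fiber_card e (SimpleGraph.mem_edgeFinset.mp he)]

lemma sum_dart_pair (F : V → V → ℕ) :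
    ∑ d : G.Dart, F d.fst d.snd = ∑ v, ∑ w ∈ G.neighborFinset v, F v w := by
  classical
  rw [← Finset.sum_fiberwise_of_maps_to
      (g := fun d : G.Dart => d.fst) (t := Finset.univ)
      (fun d _ => Finset.mem_univ _) (fun d => F d.fst d.snd)]
  refine Finset.sum_congr rfl fun v _ => ?_
  refine Finset.sum_bij' (fun d _ => d.snd)
    (fun w hw => ⟨(v, w), (SimpleGraph.mem_neighborFinset _ _ _).mp hw⟩)
    ?_ ?_ ?_ ?_ ?_
  · intro d hd
    have h1 := (Finset.mem_filter.mp hd).2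
    show d.snd ∈ _
    rw [SimpleGraph.mem_neighborFinset]
    exact h1 ▸ d.adj
  · intro w hw
    simp
  · intro d hd
    have h1 := (Finset.mem_filter.mp hd).2
    ext <;> simp [h1]
  · intro w hw
    rfl
  · intro d hd
    have h1 := (Finset.mem_filter.mp hd).2
    rw [h1]

lemma two_mul_hyperZagreb :
    2 * hyperZagreb G = ∑ v, ∑ w ∈ G.neighborFinset v, (G.degree v + G.degree w) ^ 2 := by
  classical
  set f : Sym2 V → ℕ :=
    Sym2.lift ⟨fun u v => (G.degree u + G.degree v) ^ 2, fun u v => by simp [add_comm]⟩ with hf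
  have h0 : hyperZagreb G = ∑ e ∈ G.edgeFinset, f e := by
    rw [hyperZagreb]
  have h1 : ∑ d : G.Dart, f d.edge = ∑ e ∈ G.edgeFinset, 2 * f e := sum_dart_edge G f
  have h2 : ∑ d : G.Dart, f d.edge
      = ∑ v, ∑ w ∈ G.neighborFinset v, (G.degree v + G.degree w) ^ 2 := by
    have h3 : ∀ d : G.Dart, f d.edge = (G.degree d.fst + G.degree d.snd) ^ 2 := by
      intro d
      rfl
    rw [Finset.sum_congr rfl fun d _ => h3 d]
    exact sum_dart_pair G (fun v w => (G.degree v + G.degree w) ^ 2)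
  rw [h0, Finset.mul_sum, ← h1, h2]

end Aux

lemma card_filter_lt_s3 (n c : ℕ) (h : c ≤ n) :
    #({v : Fin n | (v : ℕ) < c} : Finset (Fin n)) = c := by
  rcases eq_or_lt_of_le h with rfl | hlt
  · rw [Finset.filter_true_of_mem (fun v _ => v.is_lt), Finset.card_univ, Fintype.card_fin]
  · have h2 : ({v : Fin n | (v : ℕ) < c} : Finset (Fin n)) = Finset.Iio ⟨c, hlt⟩ := by
      ext v
      simp [Fin.lt_def]
    rw [h2, Fin.card_Iio]

lemma splitGraph_nbhd_lt (n β : ℕ) (i : Fin n) (hi : (i : ℕ) < n - β) :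
    (splitGraph n β).neighborFinset i = Finset.univ.erase i := by
  rw [SimpleGraph.neighborFinset_eq_filter]
  ext j
  simp only [Finset.mem_filter, Finset.mem_univ, true_and, Finset.mem_erase, and_true]
  show i ≠ j ∧ _ ↔ _
  constructor
  · rintro ⟨h1, _⟩
    exact fun hj => h1 hj.symm
  · intro h1
    exact ⟨fun hj => h1 hj.symm, Or.inl hi⟩

lemma splitGraph_nbhd_ge (n β : ℕ) (i : Fin n) (hi : ¬ (i : ℕ) < n - β) :
    (splitGraph n β).neighborFinset i = ({v : Fin n | (v : ℕ) < n - β} : Finset (Fin n)) := by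
  rw [SimpleGraph.neighborFinset_eq_filter]
  ext j
  simp only [Finset.mem_filter, Finset.mem_univ, true_and]
  show i ≠ j ∧ _ ↔ _
  constructor
  · rintro ⟨h1, h2 | h2⟩
    · exact absurd h2 hi
    · exact h2
  · intro h1
    refine ⟨fun hj => ?_, Or.inr h1⟩
    subst hj
    exact hi h1

lemma splitGraph_degree_lt (n β : ℕ) (i : Fin n) (hi : (i : ℕ) < n - β) :
    (splitGraph n β).degree i = n - 1 := by
  rw [← SimpleGraph.card_neighborFinset_eq_degree, splitGraph_nbhd_lt n β i hi,
    Finset.card_erase_of_mem (Finset.mem_univ _), Finset.card_univ, Fintype.card_fin]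

lemma splitGraph_degree_ge (n β : ℕ) (i : Fin n) (hi : ¬ (i : ℕ) < n - β) :
    (splitGraph n β).degree i = n - β := by
  rw [← SimpleGraph.card_neighborFinset_eq_degree, splitGraph_nbhd_ge n β i hi,
    card_filter_lt_s3 n (n - β) (Nat.sub_le n β)]

theorem hyperZagreb_splitGraph (n β : ℕ) (h : β ≤ n) :
    hyperZagreb (splitGraph n β) =
      2 * (n - β) * (n - β - 1) * (n - 1) ^ 2 + β * (n - β) * (2 * n - β - 1) ^ 2 := by
  classical
  set c := n - β with hc
  have hcn : c ≤ n := Nat.sub_le n β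
  have hkey := two_mul_hyperZagreb (splitGraph n β)
  set S : Finset (Fin n) := ({v : Fin n | (v : ℕ) < c} : Finset (Fin n)) with hS
  have hScard : #S = c := card_filter_lt_s3 n c hcn
  have hSmem : ∀ v : Fin n, v ∈ S ↔ (v : ℕ) < c := by
    intro v
    simp [hS]
  have hSccard : #(Finset.univ.filter (fun v : Fin n => ¬ (v : ℕ) < c)) = β := by
    have h1 : Finset.univ.filter (fun v : Fin n => ¬ (v : ℕ) < c) = Finset.univ \ S := by
      ext v
      simp [hSmem]
    rw [h1, Finset.card_sdiff_of_subset (Finset.subset_univ S), Finset.card_univ, Fintype.card_fin, hScard]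
    omega
  have hinner_lt : ∀ v : Fin n, (v : ℕ) < c →
      ∑ w ∈ (splitGraph n β).neighborFinset v,
          ((splitGraph n β).degree v + (splitGraph n β).degree w) ^ 2
        = (c - 1) * ((n - 1) + (n - 1)) ^ 2 + β * ((n - 1) + c) ^ 2 := by
    intro v hv
    rw [splitGraph_nbhd_lt n β v hv, splitGraph_degree_lt n β v hv,
      ← Finset.sum_filter_add_sum_filter_not (Finset.univ.erase v)
        (fun w : Fin n => (w : ℕ) < c)]
    have e1 : ∑ w ∈ (Finset.univ.erase v).filter (fun w : Fin n => (w : ℕ) < c),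
        ((n - 1) + (splitGraph n β).degree w) ^ 2 = (c - 1) * ((n - 1) + (n - 1)) ^ 2 := by
      rw [Finset.sum_congr rfl (fun w hw => by
        rw [splitGraph_degree_lt n β w (Finset.mem_filter.mp hw).2]),
        Finset.sum_const, smul_eq_mul]
      have h3 : #((Finset.univ.erase v).filter (fun w : Fin n => (w : ℕ) < c)) = c - 1 := by
        have h2 : Finset.univ.filter (fun w : Fin n => (w : ℕ) < c) = S := by
          ext w
          simp [hSmem]
        rw [Finset.filter_erase, Finset.card_erase_of_mem (by simp [hv]), h2, hScard]
      rw [h3]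
    have e2 : ∑ w ∈ (Finset.univ.erase v).filter (fun w : Fin n => ¬ (w : ℕ) < c),
        ((n - 1) + (splitGraph n β).degree w) ^ 2 = β * ((n - 1) + c) ^ 2 := by
      rw [Finset.sum_congr rfl (fun w hw => by
        rw [splitGraph_degree_ge n β w (Finset.mem_filter.mp hw).2]),
        Finset.sum_const, smul_eq_mul]
      have h3 : #((Finset.univ.erase v).filter (fun w : Fin n => ¬ (w : ℕ) < c)) = β := by
        rw [Finset.filter_erase, Finset.erase_eq_of_notMem (by simp [hv]), hSccard]
      rw [h3]
    rw [e1, e2]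
  have hinner_ge : ∀ v : Fin n, ¬ (v : ℕ) < c →
      ∑ w ∈ (splitGraph n β).neighborFinset v,
          ((splitGraph n β).degree v + (splitGraph n β).degree w) ^ 2
        = c * (c + (n - 1)) ^ 2 := by
    intro v hv
    rw [splitGraph_nbhd_ge n β v hv, splitGraph_degree_ge n β v hv]
    rw [Finset.sum_congr rfl (fun w hw => by
      rw [splitGraph_degree_lt n β w ((hSmem w).mp hw)]),
      Finset.sum_const, smul_eq_mul, hScard]
  have hsplit : ∑ v, ∑ w ∈ (splitGraph n β).neighborFinset v,
      ((splitGraph n β).degree v + (splitGraph n β).degree w) ^ 2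
      = c * ((c - 1) * ((n - 1) + (n - 1)) ^ 2 + β * ((n - 1) + c) ^ 2)
        + β * (c * (c + (n - 1)) ^ 2) := by
    rw [← Finset.sum_filter_add_sum_filter_not Finset.univ (fun v : Fin n => (v : ℕ) < c)]
    congr 1
    · rw [Finset.sum_congr rfl (fun v hv => hinner_lt v (Finset.mem_filter.mp hv).2),
        Finset.sum_const, smul_eq_mul]
      have h2 : Finset.univ.filter (fun w : Fin n => (w : ℕ) < c) = S := by
        ext w
        simp [hSmem]
      rw [h2, hScard]
    · rw [Finset.sum_congr rfl (fun v hv => hinner_ge v (Finset.mem_filter.mp hv).2),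
        Finset.sum_const, smul_eq_mul, hSccard]
  have h2nb : 2 * n - β - 1 = (n - 1) + c := by omega
  rw [h2nb]
  refine Nat.eq_of_mul_eq_mul_left (show 0 < 2 by norm_num) ?_
  rw [hkey, hsplit]
  generalize n - 1 = a
  generalize c - 1 = d
  ring
end

section
/- For complete bipartite graphs on n = n_1 + n_2 vertices with n_1 ≥ n_2 + 2 ≥ 3, HM(K_{n_1 - 1, n_2 + 1}) - HM(K_{n_1, n_2}) = (n_1 - n_2 - 1)·n^2 > 0. -/
open scoped Classical

lemma deg_inl (a b : ℕ) (u : Fin a) :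
    (completeBipartiteGraph (Fin a) (Fin b)).degree (Sum.inl u) = b := by
  unfold SimpleGraph.degree
  rw [SimpleGraph.neighborFinset_eq_filter]
  simp only [completeBipartiteGraph_adj, Sum.isLeft_inl, Sum.isRight_inl, true_and, false_and,
    or_false, Sum.isRight_iff]
  rw [Finset.card_filter, Fintype.sum_sum_type]
  simp

lemma deg_inr (a b : ℕ) (u : Fin b) :
    (completeBipartiteGraph (Fin a) (Fin b)).degree (Sum.inr u) = a := by
  unfold SimpleGraph.degree
  rw [SimpleGraph.neighborFinset_eq_filter]
  simp only [completeBipartiteGraph_adj, Sum.isRight_inr, Sum.isLeft_inr, true_and, false_and,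
    or_false, and_true, false_or, Sum.isLeft_iff]
  rw [Finset.card_filter, Fintype.sum_sum_type]
  simp

lemma card_edges (a b : ℕ) :
    (completeBipartiteGraph (Fin a) (Fin b)).edgeFinset.card = a * b := by
  have h := SimpleGraph.sum_degrees_eq_twice_card_edges (completeBipartiteGraph (Fin a) (Fin b))
  rw [Fintype.sum_sum_type] at h
  simp only [deg_inl, deg_inr, Finset.sum_const, Finset.card_univ, Fintype.card_fin,
    smul_eq_mul] at h
  rw [Nat.mul_comm b a] at h
  omega

lemma HM_bip (a b : ℕ) :
    hyperZagreb (completeBipartiteGraph (Fin a) (Fin b)) = a * b * (a + b) ^ 2 := by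
  unfold hyperZagreb
  have key : ∀ e ∈ (completeBipartiteGraph (Fin a) (Fin b)).edgeFinset,
      Sym2.lift ⟨fun u v => ((completeBipartiteGraph (Fin a) (Fin b)).degree u +
        (completeBipartiteGraph (Fin a) (Fin b)).degree v) ^ 2,
        fun u v => by simp [add_comm]⟩ e = (a + b) ^ 2 := by
    intro e he
    induction e with
    | _ x y =>
      rw [SimpleGraph.mem_edgeFinset, SimpleGraph.mem_edgeSet] at he
      cases x <;> cases y <;> simp_all [deg_inl, deg_inr, add_comm]
  rw [Finset.sum_congr rfl key, Finset.sum_const, card_edges, smul_eq_mul]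

/-- Balancing a complete bipartite graph increases the hyper-Zagreb index:
for `n = n₁ + n₂` with `n₁ ≥ n₂ + 2 ≥ 3`,
`HM(K_{n₁-1,n₂+1}) - HM(K_{n₁,n₂}) = (n₁ - n₂ - 1)·n² > 0`. -/
theorem hyperZagreb_completeBipartite_balance (n n₁ n₂ : ℕ) (hn : n = n₁ + n₂)
    (h₂ : 1 ≤ n₂) (h₁ : n₂ + 2 ≤ n₁) :
    (hyperZagreb (completeBipartiteGraph (Fin (n₁ - 1)) (Fin (n₂ + 1))) : ℤ) -
        hyperZagreb (completeBipartiteGraph (Fin n₁) (Fin n₂)) =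
        ((n₁ : ℤ) - n₂ - 1) * n ^ 2 ∧
      hyperZagreb (completeBipartiteGraph (Fin n₁) (Fin n₂)) <
        hyperZagreb (completeBipartiteGraph (Fin (n₁ - 1)) (Fin (n₂ + 1))) := by
  obtain ⟨k, hk⟩ : ∃ k, n₁ = n₂ + 2 + k := ⟨n₁ - (n₂ + 2), by omega⟩
  subst hk hn
  rw [HM_bip, HM_bip]
  constructor
  · have h1 : n₂ + 2 + k - 1 = n₂ + 1 + k := by omega
    rw [h1]
    push_cast
    ring
  · have h1 : n₂ + 2 + k - 1 = n₂ + 1 + k := by omega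
    rw [h1]
    nlinarith [sq_nonneg (n₂ + 2 + k + n₂), h₂]
end

section
/- For a complete r-partite graph K_{n_1,...,n_r} on n vertices with r ≥ 3 and n_1 ≥ n_r + 2, the hyper-Zagreb index strictly increases upon moving one vertex from the largest part to the smallest: HM(K_{n_1 - 1, n_2, ..., n_r + 1}) > HM(K_{n_1, n_2, ..., n_r}). -/
open scoped Classical
open Finset SimpleGraph

lemma dart_sum {V : Type*} [Fintype V] (G : SimpleGraph V) [DecidableRel G.Adj]
    (w : Sym2 V → ℕ) :
    ∑ d : G.Dart, w d.edge = 2 * ∑ e ∈ G.edgeFinset, w e := by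
  classical
  rw [← Finset.sum_fiberwise_of_maps_to (g := SimpleGraph.Dart.edge)
    (t := G.edgeFinset) (fun d _ => by simp) (fun d => w d.edge)]
  rw [Finset.mul_sum]
  refine Finset.sum_congr rfl fun e he => ?_
  rw [Finset.sum_congr rfl (fun d hd => by rw [(Finset.mem_filter.mp hd).2]),
    Finset.sum_const, G.dart_edge_fiber_card e (by rwa [← mem_edgeFinset]), smul_eq_mul]

lemma dart_sum2 {V : Type*} [Fintype V] (G : SimpleGraph V) [DecidableRel G.Adj]
    (w : Sym2 V → ℕ) :
    ∑ d : G.Dart, w d.edge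
      = ∑ p ∈ univ.filter (fun p : V × V => G.Adj p.1 p.2), w (Sym2.mk p.1 p.2) := by
  refine Finset.sum_bij' (fun d _ => d.toProd)
    (fun p hp => ⟨p, by simpa using (Finset.mem_filter.mp hp).2⟩) ?_ ?_ ?_ ?_ ?_ <;>
    intros <;> simp_all [SimpleGraph.Dart.edge]


lemma degree_cmg {r : ℕ} (f : Fin r → ℕ) (v : Σ i, Fin (f i))
    [Fintype ((completeMultipartiteGraph fun i => Fin (f i)).neighborSet v)] :
    (completeMultipartiteGraph fun i => Fin (f i)).degree v
      = ∑ k ∈ univ.erase v.1, f k := by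
  classical
  rw [← card_neighborFinset_eq_degree]
  have h : (completeMultipartiteGraph fun i => Fin (f i)).neighborFinset v
      = univ.filter (fun w => v.1 ≠ w.1) := by
    ext w; simp [mem_neighborFinset]
  rw [h, Finset.card_filter, ← Finset.univ_sigma_univ, Finset.sum_sigma]
  have h2 : ∀ k : Fin r, (∑ _y : Fin (f k), if v.1 ≠ k then 1 else 0)
      = if v.1 ≠ k then f k else 0 := by
    intro k; split <;> simp
  rw [Finset.sum_congr rfl fun k _ => h2 k, ← Finset.sum_filter, Finset.filter_ne]

lemma pair_count {r : ℕ} (f : Fin r → ℕ) (W : Fin r → Fin r → ℕ) :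
    ∑ p ∈ univ.filter (fun p : (Σ i, Fin (f i)) × (Σ i, Fin (f i)) => p.1.1 ≠ p.2.1),
      W p.1.1 p.2.1
    = ∑ i, f i * ∑ k ∈ univ.erase i, f k * W i k := by
  classical
  have inner : ∀ i : Fin r, (∑ w : Σ k, Fin (f k), if i ≠ w.1 then W i w.1 else 0)
      = ∑ k ∈ univ.erase i, f k * W i k := by
    intro i
    rw [← Finset.univ_sigma_univ, Finset.sum_sigma]
    have : ∀ k : Fin r, (∑ _y : Fin (f k), if i ≠ k then W i k else 0)
        = if i ≠ k then f k * W i k else 0 := by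
      intro k; split <;> simp [mul_comm]
    rw [Finset.sum_congr rfl fun k _ => this k, ← Finset.sum_filter, Finset.filter_ne]
  calc ∑ p ∈ univ.filter (fun p : (Σ i, Fin (f i)) × (Σ i, Fin (f i)) => p.1.1 ≠ p.2.1),
        W p.1.1 p.2.1
      = ∑ u : Σ i, Fin (f i), ∑ w : Σ i, Fin (f i), if u.1 ≠ w.1 then W u.1 w.1 else 0 := by
        rw [Finset.sum_filter, Fintype.sum_prod_type]
    _ = ∑ u : Σ i, Fin (f i), ∑ k ∈ univ.erase u.1, f k * W u.1 k :=
        Finset.sum_congr rfl fun u _ => inner u.1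
    _ = ∑ i, ∑ _x : Fin (f i), ∑ k ∈ univ.erase i, f k * W i k := by
        rw [← Finset.univ_sigma_univ, Finset.sum_sigma]
    _ = ∑ i, f i * ∑ k ∈ univ.erase i, f k * W i k := by
        refine Finset.sum_congr rfl fun i _ => ?_
        rw [Finset.sum_const, Finset.card_univ, Fintype.card_fin, smul_eq_mul]

lemma edge_pair_sum {V : Type*} [Fintype V] (G : SimpleGraph V) [DecidableRel G.Adj]
    (w : Sym2 V → ℕ) :
    2 * ∑ e ∈ G.edgeFinset, w e
      = ∑ p ∈ univ.filter (fun p : V × V => G.Adj p.1 p.2), w (Sym2.mk p.1 p.2) := by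
  rw [← dart_sum]; exact dart_sum2 G w


set_option maxHeartbeats 1000000 in
lemma key {r : ℕ} (f : Fin r → ℕ) :
    2 * hyperZagreb (completeMultipartiteGraph fun i => Fin (f i))
      = ∑ i, f i * ∑ k ∈ univ.erase i, f k *
          ((∑ m ∈ univ.erase i, f m) + (∑ m ∈ univ.erase k, f m))^2 := by
  classical
  unfold hyperZagreb
  rw [edge_pair_sum]
  have h3 := pair_count f (fun i k =>
    ((∑ m ∈ univ.erase i, f m) + (∑ m ∈ univ.erase k, f m))^2)
  refine Eq.trans (Finset.sum_congr (by ext p; simp) fun p hp => ?_) h3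
  rw [Sym2.lift_mk]
  dsimp only
  rw [degree_cmg, degree_cmg]


lemma offdiag_powersum {ι : Type*} [Fintype ι] [DecidableEq ι] (x : ι → ℤ) :
    ∑ i, x i * ∑ k ∈ univ.erase i, x k * (2 * (∑ j, x j) - x i - x k)^2
      = 4*(∑ j, x j)^4 - 12*(∑ j, x j)^2*(∑ j, (x j)^2)
        + 10*(∑ j, x j)*(∑ j, (x j)^3) + 2*(∑ j, (x j)^2)^2 - 4*(∑ j, (x j)^4) := by
  set T := ∑ j, x j with hT
  set p2 := ∑ j, (x j)^2 with hp2
  set p3 := ∑ j, (x j)^3 with hp3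
  set p4 := ∑ j, (x j)^4 with hp4
  have hin : ∀ i, ∑ k, x k * (2*T - x i - x k)^2
      = (2*T - x i)^2 * T - (2*(2*T - x i))*p2 + p3 := by
    intro i
    have e : ∀ k, x k * (2*T - x i - x k)^2
        = (2*T - x i)^2 * x k - (2*(2*T - x i)) * (x k)^2 + (x k)^3 := fun k => by ring
    rw [Finset.sum_congr rfl fun k _ => e k, Finset.sum_add_distrib,
      Finset.sum_sub_distrib, ← Finset.mul_sum, ← Finset.mul_sum, ← hT, ← hp2, ← hp3]
  have her : ∀ i, ∑ k ∈ univ.erase i, x k * (2*T - x i - x k)^2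
      = (2*T - x i)^2 * T - (2*(2*T - x i))*p2 + p3 - x i * (2*T - x i - x i)^2 := by
    intro i
    rw [Finset.sum_erase_eq_sub (Finset.mem_univ i), hin]
  rw [Finset.sum_congr rfl fun i _ => by rw [her i]]
  have e2 : ∀ i, x i * ((2*T - x i)^2 * T - (2*(2*T - x i))*p2 + p3 - x i * (2*T - x i - x i)^2)
      = (4*T^3 - 4*T*p2 + p3) * x i + (2*p2 - 8*T^2) * (x i)^2 + (9*T) * (x i)^3
        + (-4) * (x i)^4 := fun i => by ring
  rw [Finset.sum_congr rfl fun i _ => e2 i]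
  rw [Finset.sum_add_distrib, Finset.sum_add_distrib, Finset.sum_add_distrib,
    ← Finset.mul_sum, ← Finset.mul_sum, ← Finset.mul_sum, ← Finset.mul_sum,
    ← hT, ← hp2, ← hp3, ← hp4]
  ring

lemma cast_key {r : ℕ} (f : Fin r → ℕ) :
    ((∑ i, f i * ∑ k ∈ univ.erase i, f k *
        ((∑ m ∈ univ.erase i, f m) + (∑ m ∈ univ.erase k, f m))^2 : ℕ) : ℤ)
      = ∑ i, (f i : ℤ) * ∑ k ∈ univ.erase i, (f k : ℤ)
          * (2 * (∑ j, (f j : ℤ)) - f i - f k)^2 := by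
  push_cast
  refine Finset.sum_congr rfl fun i _ => ?_
  refine congrArg _ (Finset.sum_congr rfl fun k hk => ?_)
  rw [Finset.sum_erase_eq_sub (Finset.mem_univ i), Finset.sum_erase_eq_sub (Finset.mem_univ k)]
  ring

lemma sum_update_cast {ι : Type*} [Fintype ι] [DecidableEq ι] (g : ι → ℕ) (j : ι) (v : ℕ)
    (F : ℕ → ℤ) :
    ∑ i, F (Function.update g j v i) = F v - F (g j) + ∑ i, F (g i) := by
  have h : (fun i => F (Function.update g j v i))
      = Function.update (fun i => F (g i)) j (F v) := by
    funext i; by_cases hi : i = j <;> simp [hi, Function.update_apply]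
  rw [h, Finset.sum_update_of_mem (Finset.mem_univ j), Finset.sdiff_singleton_eq_erase,
    Finset.sum_erase_eq_sub (Finset.mem_univ j)]
  ring

lemma main_ineq {r : ℕ} (hr : 3 ≤ r) (f : Fin r → ℕ) (i0 ir : Fin r) (hne : i0 ≠ ir)
    (hpos : ∀ i, 1 ≤ f i) (hle : ∀ k, f k ≤ f i0) (hgap : f ir + 2 ≤ f i0) :
    ∑ i, f i * ∑ k ∈ univ.erase i, f k *
        ((∑ m ∈ univ.erase i, f m) + (∑ m ∈ univ.erase k, f m))^2
    < ∑ i, (Function.update (Function.update f i0 (f i0 - 1)) ir (f ir + 1)) i *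
        ∑ k ∈ univ.erase i, (Function.update (Function.update f i0 (f i0 - 1)) ir (f ir + 1)) k *
        ((∑ m ∈ univ.erase i, (Function.update (Function.update f i0 (f i0 - 1)) ir (f ir + 1)) m)
          + (∑ m ∈ univ.erase k, (Function.update (Function.update f i0 (f i0 - 1)) ir (f ir + 1)) m))^2 := by
  classical
  set g : Fin r → ℕ := Function.update (Function.update f i0 (f i0 - 1)) ir (f ir + 1) with hg
  have hZ : ((∑ i, f i * ∑ k ∈ univ.erase i, f k *
        ((∑ m ∈ univ.erase i, f m) + (∑ m ∈ univ.erase k, f m))^2 : ℕ) : ℤ)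
      < ((∑ i, g i * ∑ k ∈ univ.erase i, g k *
        ((∑ m ∈ univ.erase i, g m) + (∑ m ∈ univ.erase k, g m))^2 : ℕ) : ℤ) := by
    rw [cast_key f, cast_key g, offdiag_powersum (fun i => ((f i : ℕ) : ℤ)),
      offdiag_powersum (fun i => ((g i : ℕ) : ℤ))]
    -- power sum relations
    have hq : ∀ m : ℕ, ∑ i, (g i : ℤ)^m
        = ∑ i, (f i:ℤ)^m + ((f ir:ℤ) + 1)^m - (f ir:ℤ)^m + ((f i0:ℤ) - 1)^m - (f i0:ℤ)^m := by
      intro m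
      have h1 := sum_update_cast (Function.update f i0 (f i0 - 1)) ir (f ir + 1)
        (fun n => (n:ℤ)^m)
      have h2 := sum_update_cast f i0 (f i0 - 1) (fun n => (n:ℤ)^m)
      rw [hg]
      rw [h1, h2, Function.update_of_ne hne.symm]
      have hc1 : ((f ir + 1 : ℕ) : ℤ) = (f ir : ℤ) + 1 := by push_cast; ring
      have hc2 : ((f i0 - 1 : ℕ) : ℤ) = (f i0 : ℤ) - 1 := by
        rw [Nat.cast_sub (hpos i0)]; norm_num
      rw [hc1, hc2]; ring
    have hq1 : ∑ i, (g i : ℤ) = ∑ i, (f i:ℤ) := by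
      have := hq 1; simp only [pow_one] at this; rw [this]; ring
    rw [hq1, hq 2, hq 3, hq 4]
    -- abbreviations
    set a := (f i0 : ℤ) with ha
    set b := (f ir : ℤ) with hb
    set ee := (univ.erase ir).erase i0 with hee
    have hi0m : i0 ∈ univ.erase ir := Finset.mem_erase.mpr ⟨hne, Finset.mem_univ i0⟩
    have d1 : ∑ i, (f i:ℤ) = a + b + ∑ k ∈ ee, (f k:ℤ) := by
      rw [← Finset.add_sum_erase _ _ (Finset.mem_univ ir), ← Finset.add_sum_erase _ _ hi0m]
      ring
    have d2 : ∑ i, (f i:ℤ)^2 = a^2 + b^2 + ∑ k ∈ ee, (f k:ℤ)^2 := by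
      rw [← Finset.add_sum_erase _ (fun i => ((f i : ℕ):ℤ)^2) (Finset.mem_univ ir),
        ← Finset.add_sum_erase _ _ hi0m]
      ring
    have hcard : 1 ≤ ee.card := by
      rw [hee, Finset.card_erase_of_mem hi0m, Finset.card_erase_of_mem (Finset.mem_univ ir),
        Finset.card_univ, Fintype.card_fin]
      omega
    have hs1 : (1:ℤ) ≤ ∑ k ∈ ee, (f k:ℤ) := by
      obtain ⟨k0, hk0⟩ := Finset.card_pos.mp hcard
      calc (1:ℤ) ≤ (f k0 : ℤ) := by exact_mod_cast hpos k0
        _ ≤ ∑ k ∈ ee, (f k:ℤ) :=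
          Finset.single_le_sum (fun k _ => Int.natCast_nonneg _) hk0
    have hqs : ∑ k ∈ ee, (f k:ℤ)^2 ≤ a * ∑ k ∈ ee, (f k:ℤ) := by
      rw [Finset.mul_sum]
      refine Finset.sum_le_sum fun k _ => ?_
      have h1 : (f k : ℤ) ≤ a := by rw [ha]; exact_mod_cast hle k
      have h2 : (0:ℤ) ≤ (f k : ℤ) := Int.natCast_nonneg _
      nlinarith
    have hab : b + 2 ≤ a := by rw [ha, hb]; exact_mod_cast hgap
    have hb1 : (1:ℤ) ≤ b := by rw [hb]; exact_mod_cast hpos ir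
    set s := ∑ k ∈ ee, (f k:ℤ) with hsdef
    set qq := ∑ k ∈ ee, (f k:ℤ)^2 with hqdef
    set P3 := ∑ j, (f j:ℤ)^3 with hp3
    set P4 := ∑ j, (f j:ℤ)^4 with hp4
    rw [d1, d2]
    nlinarith [sq_nonneg (a + b + 2*s), mul_pos (by linarith : (0:ℤ) < a - b - 1)
        (by nlinarith [sq_nonneg (a + b + 2*s)] : (0:ℤ) < (a + b + 2*s)^2 + 8*(a+b+s)*s - 4*qq - 3*(a+b)*s),
      sq_nonneg (a - b), mul_nonneg (by linarith : (0:ℤ) ≤ s) (by linarith : (0:ℤ) ≤ a - b - 1)]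
  exact_mod_cast hZ

/-- In a complete `r`-partite graph (`r ≥ 3`) with part sizes
`n₁ ≥ n₂ ≥ ⋯ ≥ n_r ≥ 1` and `n₁ ≥ n_r + 2`, moving one vertex from the largest
part to the smallest part strictly increases the hyper-Zagreb index. -/
theorem hyperZagreb_completeMultipartite_balance (r : ℕ) (hr : 3 ≤ r)
    (f : Fin r → ℕ) (hpos : ∀ i, 1 ≤ f i)
    (hanti : ∀ i j : Fin r, i ≤ j → f j ≤ f i)
    (hgap : f (Fin.last (r - 1) |>.cast (by omega)) + 2 ≤ f ⟨0, by omega⟩) :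
    hyperZagreb (SimpleGraph.completeMultipartiteGraph (fun i => Fin (f i))) <
      hyperZagreb (SimpleGraph.completeMultipartiteGraph (fun i =>
        Fin (Function.update (Function.update f ⟨0, by omega⟩ (f ⟨0, by omega⟩ - 1))
          (Fin.last (r - 1) |>.cast (by omega))
          (f (Fin.last (r - 1) |>.cast (by omega)) + 1) i))) := by
  classical
  have hne : (⟨0, by omega⟩ : Fin r) ≠ ((Fin.last (r - 1)).cast (by omega)) := by
    intro h
    have h2 := congrArg Fin.val h
    simp [Fin.coe_cast, Fin.val_last] at h2
    omega
  have hle : ∀ k, f k ≤ f ⟨0, by omega⟩ := fun k => hanti _ k (by simp [Fin.le_def])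
  apply Nat.lt_of_mul_lt_mul_left (a := 2)
  rw [key, key]
  exact main_ineq hr f _ _ hne hpos hle hgap
end

section
/- The hyper-Zagreb index of the graph (K_1 ∪ K_{n-k-1}) ∨ K_k equals 4·C(k,2)·(n-1)^2 + 4·C(n-k-1,2)·(n-2)^2 + k(n-k-1)(2n-3)^2 + k(n+k-1)^2. -/
open scoped Classical
open Finset

/-- The graph `(K₁ ∪ K_{n-k-1}) ∨ K_k` on `Fin n`: the first `k` vertices form
the join part `K_k` (adjacent to everything), vertex `k` is the isolated-part
vertex, and the last `n - k - 1` vertices form a clique. -/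
def joinOneClique (n k : ℕ) : SimpleGraph (Fin n) where
  Adj i j := i ≠ j ∧ ((i : ℕ) < k ∨ (j : ℕ) < k ∨ ((i : ℕ) ≠ k ∧ (j : ℕ) ≠ k))
  symm := by
    constructor
    intro i j ⟨h1, h2⟩
    refine ⟨h1.symm, ?_⟩
    tauto
  loopless := by
    constructor
    intro i hi
    exact hi.1 rfl

open Finset in
lemma two_mul_sum_edges {V : Type*} [Fintype V] [DecidableEq V] (G : SimpleGraph V)
    [DecidableRel G.Adj] (g : V → V → ℕ) (hg : ∀ u v, g u v = g v u) :
    2 * ∑ e ∈ G.edgeFinset, Sym2.lift ⟨g, hg⟩ e =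
      ∑ v, ∑ w ∈ G.neighborFinset v, g v w := by
  have h1 : ∑ d : G.Dart, g d.toProd.1 d.toProd.2 =
      2 * ∑ e ∈ G.edgeFinset, Sym2.lift ⟨g, hg⟩ e := by
    have hmaps : ∀ d : G.Dart, d ∈ (univ : Finset G.Dart) → d.edge ∈ G.edgeFinset :=
      fun d _ => by rw [SimpleGraph.mem_edgeFinset]; exact d.edge_mem
    rw [← Finset.sum_fiberwise_of_maps_to hmaps, Finset.mul_sum]
    refine Finset.sum_congr rfl fun e he => ?_
    have hcard : #({d : G.Dart | d.edge = e} : Finset _) = 2 :=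
      G.dart_edge_fiber_card e (SimpleGraph.mem_edgeFinset.mp he)
    have hterm : ∀ d : G.Dart, d ∈ ({d : G.Dart | d.edge = e} : Finset _) →
        g d.toProd.1 d.toProd.2 = Sym2.lift ⟨g, hg⟩ e := by
      intro d hd
      simp only [Finset.mem_filter] at hd
      rw [← hd.2]
      obtain ⟨⟨a, b⟩, p⟩ := d
      simp [SimpleGraph.Dart.edge]
    rw [Finset.sum_congr rfl hterm, Finset.sum_const, hcard, smul_eq_mul]
  rw [← h1]
  have hmaps2 : ∀ d : G.Dart, d ∈ (univ : Finset G.Dart) →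
      d.toProd.1 ∈ (univ : Finset V) := fun d _ => Finset.mem_univ _
  rw [← Finset.sum_fiberwise_of_maps_to hmaps2]
  refine Finset.sum_congr rfl fun v _ => ?_
  refine Finset.sum_bij (fun (d : G.Dart) _ => d.toProd.2) ?_ ?_ ?_ ?_
  · rintro d hd
    simp only [Finset.mem_filter] at hd
    obtain ⟨-, h2⟩ := hd
    subst h2
    rw [SimpleGraph.mem_neighborFinset]
    exact d.adj
  · rintro ⟨⟨a1, b1⟩, p1⟩ h1 ⟨⟨a2, b2⟩, p2⟩ h2 hsnd
    simp only [Finset.mem_filter] at h1 h2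
    simp_all
  · intro w hw
    rw [SimpleGraph.mem_neighborFinset] at hw
    exact ⟨⟨(v, w), hw⟩, by simp, rfl⟩
  · intro d hd
    simp only [Finset.mem_filter] at hd
    obtain ⟨-, h2⟩ := hd
    subst h2
    rfl

lemma four_choose_two (a : ℕ) : 4 * a.choose 2 = 2 * (a * (a - 1)) := by
  induction a with
  | zero => rfl
  | succ b ih =>
    rw [Nat.choose_succ_succ, Nat.choose_one_right, Nat.mul_add, ih]
    cases b with
    | zero => rfl
    | succ c =>
      simp only [Nat.succ_sub_one]
      ring

lemma joinOneClique_adj (n k : ℕ) (i j : Fin n) :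
    (joinOneClique n k).Adj i j ↔
      i ≠ j ∧ ((i : ℕ) < k ∨ (j : ℕ) < k ∨ ((i : ℕ) ≠ k ∧ (j : ℕ) ≠ k)) := Iff.rfl

theorem hyperZagreb_joinOneClique (n k : ℕ) (h : k + 1 ≤ n) :
    hyperZagreb (joinOneClique n k) =
      4 * Nat.choose k 2 * (n - 1) ^ 2 + 4 * Nat.choose (n - k - 1) 2 * (n - 2) ^ 2 +
        k * (n - k - 1) * (2 * n - 3) ^ 2 + k * (n + k - 1) ^ 2 := by
  classical
  have hk : k < n := h
  set G := joinOneClique n k with hG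
  haveI hdec : DecidableRel G.Adj := fun i j => instDecidableAnd
  set vk : Fin n := ⟨k, hk⟩ with hvk
  set A : Finset (Fin n) := univ.filter (fun j => (j : ℕ) < k) with hA
  set C : Finset (Fin n) := univ.filter (fun j => k < (j : ℕ)) with hC
  -- cardinalities
  have cardA : A.card = k := by
    have : A = Finset.attachFin (Finset.range k) (fun m hm => lt_trans (mem_range.mp hm) hk) := by
      ext a
      simp [hA, Finset.mem_attachFin]
    rw [this, Finset.card_attachFin, Finset.card_range]
  have cardC : C.card = n - k - 1 := by
    have : C = Finset.attachFin (Finset.Ico (k+1) n) (fun m hm => (mem_Ico.mp hm).2) := by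
      ext a
      simp only [hC, Finset.mem_attachFin, mem_Ico, mem_filter, mem_univ, true_and]
      exact ⟨fun h' => ⟨h', a.isLt⟩, fun h' => h'.1⟩
    rw [this, Finset.card_attachFin, Nat.card_Ico]
    omega
  -- membership facts
  have vk_val : (vk : ℕ) = k := rfl
  -- neighborhoods
  have NA : ∀ v : Fin n, (v : ℕ) < k → G.neighborFinset v = univ.erase v := by
    intro v hv
    ext w
    simp only [SimpleGraph.mem_neighborFinset, mem_erase, mem_univ, and_true,
      hG, joinOneClique_adj]
    constructor
    · rintro ⟨h1, -⟩; exact h1.symm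
    · intro h1; exact ⟨h1.symm, Or.inl hv⟩
  have NB : G.neighborFinset vk = A := by
    ext w
    simp only [SimpleGraph.mem_neighborFinset, hG, joinOneClique_adj, hA,
      mem_filter, mem_univ, true_and, vk_val]
    constructor
    · rintro ⟨h1, h2⟩
      rcases h2 with h2 | h2 | h2
      · omega
      · exact h2
      · exact absurd rfl h2.1
    · intro hw
      refine ⟨?_, Or.inr (Or.inl hw)⟩
      intro he
      rw [← he] at hw
      omega
  have NC : ∀ v : Fin n, k < (v : ℕ) → G.neighborFinset v = (univ.erase vk).erase v := by
    intro v hv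
    ext w
    simp only [SimpleGraph.mem_neighborFinset, mem_erase, mem_univ, and_true,
      hG, joinOneClique_adj]
    constructor
    · rintro ⟨h1, h2⟩
      refine ⟨h1.symm, ?_⟩
      intro he
      rw [he] at h2
      simp only [vk_val] at h2
      omega
    · rintro ⟨h1, h2⟩
      refine ⟨h1.symm, ?_⟩
      right; right
      refine ⟨by omega, ?_⟩
      intro he
      exact h2 (Fin.ext (by rw [he, vk_val]))
  -- degrees
  have degA : ∀ v : Fin n, (v : ℕ) < k → G.degree v = n - 1 := by
    intro v hv
    rw [SimpleGraph.degree, NA v hv, Finset.card_erase_of_mem (mem_univ v), card_univ,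
      Fintype.card_fin]
  have degB : G.degree vk = k := by
    rw [SimpleGraph.degree, NB, cardA]
  have degC : ∀ v : Fin n, k < (v : ℕ) → G.degree v = n - 2 := by
    intro v hv
    have hvvk : v ∈ univ.erase vk := by
      rw [mem_erase]
      exact ⟨fun he => by rw [he] at hv; omega, mem_univ v⟩
    rw [SimpleGraph.degree, NC v hv, Finset.card_erase_of_mem hvvk,
      Finset.card_erase_of_mem (mem_univ vk), card_univ, Fintype.card_fin]
    omega
  -- partition lemma
  have hpart : ∀ f : Fin n → ℕ, ∑ v, f v = (∑ v ∈ A, f v) + f vk + ∑ v ∈ C, f v := by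
    intro f
    have hu : (univ : Finset (Fin n)) = A ∪ insert vk C := by
      ext a
      simp only [mem_univ, true_iff, mem_union, mem_insert, hA, hC, mem_filter, true_and,
        Fin.ext_iff, vk_val]
      omega
    have hd : Disjoint A (insert vk C) := by
      rw [Finset.disjoint_left]
      intro a ha hb
      simp only [hA, mem_filter, mem_univ, true_and] at ha
      simp only [mem_insert, hC, mem_filter, mem_univ, true_and, Fin.ext_iff, vk_val] at hb
      omega
    have hvkC : vk ∉ C := by
      simp [hC, vk_val]
    rw [hu, Finset.sum_union hd, Finset.sum_insert hvkC, add_assoc]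
    -- key double count
  have key : 2 * hyperZagreb G = ∑ v, ∑ w ∈ G.neighborFinset v, (G.degree v + G.degree w)^2 := by
    have h2 := two_mul_sum_edges G (fun u w => (G.degree u + G.degree w)^2)
      (fun u w => by simp [add_comm])
    rw [← h2]
    unfold hyperZagreb
    congr!
  -- inner sums
  have SA : ∀ v ∈ A, (∑ w ∈ G.neighborFinset v, (G.degree v + G.degree w)^2)
      = (k-1)*((n-1)+(n-1))^2 + (((n-1)+k)^2 + (n-k-1)*((n-1)+(n-2))^2) := by
    intro v hv
    have hv' : (v : ℕ) < k := by simpa [hA] using hv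
    have hdv := degA v hv'
    set f : Fin n → ℕ := fun w => (G.degree v + G.degree w)^2 with hf
    have e1 : ∑ w ∈ A.erase v, f w = (k-1)*((n-1)+(n-1))^2 := by
      have step : ∀ w ∈ A.erase v, f w = ((n-1)+(n-1))^2 := by
        intro w hw
        have hw' : (w : ℕ) < k := by
          have := Finset.mem_of_mem_erase hw
          simpa [hA] using this
        rw [hf]; simp only []
        rw [hdv, degA w hw']
      rw [Finset.sum_congr rfl step, Finset.sum_const, Finset.card_erase_of_mem hv, cardA,
        smul_eq_mul]
    have evk : f vk = ((n-1)+k)^2 := by rw [hf]; simp only []; rw [hdv, degB]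
    have eC : ∑ w ∈ C, f w = (n-k-1)*((n-1)+(n-2))^2 := by
      have step : ∀ w ∈ C, f w = ((n-1)+(n-2))^2 := by
        intro w hw
        have hw' : k < (w : ℕ) := by simpa [hC] using hw
        rw [hf]; simp only []
        rw [hdv, degC w hw']
      rw [Finset.sum_congr rfl step, Finset.sum_const, cardC, smul_eq_mul]
    have h0 := Finset.add_sum_erase univ f (mem_univ v)
    rw [hpart f, ← Finset.add_sum_erase A f hv, e1, evk, eC] at h0
    rw [NA v hv']
    exact Nat.add_left_cancel (h0.trans (by ring))
  have SB : (∑ w ∈ G.neighborFinset vk, (G.degree vk + G.degree w)^2)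
      = k * (k + (n-1))^2 := by
    rw [NB]
    have step : ∀ w ∈ A, (G.degree vk + G.degree w)^2 = (k + (n-1))^2 := by
      intro w hw
      have hw' : (w : ℕ) < k := by simpa [hA] using hw
      rw [degB, degA w hw']
    rw [Finset.sum_congr rfl step, Finset.sum_const, cardA, smul_eq_mul]
  have SC : ∀ v ∈ C, (∑ w ∈ G.neighborFinset v, (G.degree v + G.degree w)^2)
      = k*((n-2)+(n-1))^2 + (n-k-2)*((n-2)+(n-2))^2 := by
    intro v hv
    have hv' : k < (v : ℕ) := by simpa [hC] using hv
    have hdv := degC v hv'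
    rw [NC v hv']
    have hset : (univ.erase vk).erase v = A ∪ C.erase v := by
      ext a
      simp only [mem_erase, mem_univ, and_true, mem_union, hA, hC, mem_filter, true_and,
        Fin.ext_iff, vk_val]
      omega
    have hdisj : Disjoint A (C.erase v) := by
      rw [Finset.disjoint_left]
      intro a ha hb
      simp only [hA, mem_filter, mem_univ, true_and] at ha
      have := Finset.mem_of_mem_erase hb
      simp only [hC, mem_filter, mem_univ, true_and] at this
      omega
    rw [hset, Finset.sum_union hdisj]
    have e1 : ∑ w ∈ A, (G.degree v + G.degree w)^2 = k*((n-2)+(n-1))^2 := by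
      have step : ∀ w ∈ A, (G.degree v + G.degree w)^2 = ((n-2)+(n-1))^2 := by
        intro w hw
        have hw' : (w : ℕ) < k := by simpa [hA] using hw
        rw [hdv, degA w hw']
      rw [Finset.sum_congr rfl step, Finset.sum_const, cardA, smul_eq_mul]
    have e2 : ∑ w ∈ C.erase v, (G.degree v + G.degree w)^2 = (n-k-2)*((n-2)+(n-2))^2 := by
      have step : ∀ w ∈ C.erase v, (G.degree v + G.degree w)^2 = ((n-2)+(n-2))^2 := by
        intro w hw
        have hw' : k < (w : ℕ) := by
          have := Finset.mem_of_mem_erase hw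
          simpa [hC] using this
        rw [hdv, degC w hw']
      rw [Finset.sum_congr rfl step, Finset.sum_const, Finset.card_erase_of_mem hv, cardC,
        smul_eq_mul]
      all_goals congr 1
      all_goals omega
    rw [e1, e2]
  -- assemble
  have key2 : 2 * hyperZagreb G
      = k * ((k-1)*((n-1)+(n-1))^2 + (((n-1)+k)^2 + (n-k-1)*((n-1)+(n-2))^2))
        + k * (k + (n-1))^2
        + (n-k-1) * (k*((n-2)+(n-1))^2 + (n-k-2)*((n-2)+(n-2))^2) := by
    rw [key, hpart (fun v => ∑ w ∈ G.neighborFinset v, (G.degree v + G.degree w)^2)]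
    rw [Finset.sum_congr rfl SA, Finset.sum_const, cardA, smul_eq_mul,
      Finset.sum_congr rfl SC, Finset.sum_const, cardC, smul_eq_mul, SB]
  -- final arithmetic
  have arith : 2 * (4 * Nat.choose k 2 * (n - 1) ^ 2 + 4 * Nat.choose (n - k - 1) 2 * (n - 2) ^ 2 +
        k * (n - k - 1) * (2 * n - 3) ^ 2 + k * (n + k - 1) ^ 2)
      = k * ((k-1)*((n-1)+(n-1))^2 + (((n-1)+k)^2 + (n-k-1)*((n-1)+(n-2))^2))
        + k * (k + (n-1))^2
        + (n-k-1) * (k*((n-2)+(n-1))^2 + (n-k-2)*((n-2)+(n-2))^2) := by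
    obtain ⟨m, rfl⟩ : ∃ m, n = k + 1 + m := ⟨n - k - 1, by omega⟩
    have r1 : k + 1 + m - 1 = k + m := by omega
    have r2 : k + 1 + m - 2 = k + m - 1 := by omega
    have r3 : k + 1 + m - k - 1 = m := by omega
    have r4 : k + 1 + m - k - 2 = m - 1 := by omega
    have r5 : k + 1 + m + k - 1 = k + k + m := by omega
    have r6 : 2 * (k + 1 + m) - 3 = (k + m) + (k + m - 1) := by omega
    rw [r1, r2, r3, r4, r5, r6]
    rw [show 4 * Nat.choose k 2 * (k + m)^2 = 2 * (k * (k-1)) * (k+m)^2 by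
      rw [four_choose_two]]
    rw [show 4 * Nat.choose m 2 * (k + m - 1)^2 = 2 * (m * (m-1)) * (k+m-1)^2 by
      rw [four_choose_two]]
    rcases k with _ | c <;> rcases m with _ | s
    · simp
    · simp only [Nat.zero_add, Nat.succ_sub_one, Nat.zero_sub, Nat.sub_zero,
        Nat.zero_mul, Nat.mul_zero]
      try ring
    · simp only [Nat.add_zero, Nat.succ_sub_one, Nat.zero_sub, Nat.sub_zero,
        Nat.zero_mul, Nat.mul_zero]
      ring
    · rw [show c + 1 + (s + 1) - 1 = c + s + 1 from by omega]
      simp only [Nat.succ_sub_one]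
      ring
  exact Nat.eq_of_mul_eq_mul_left two_pos (key2.trans arith.symm)
end

section
/- For integers k ≥ 1 and 2 ≤ k_1 ≤ k_2 with n = k + k_1 + k_2, the hyper-Zagreb index satisfies HM((K_{k_1 - 1} ∪ K_{k_2 + 1}) ∨ K_k) > HM((K_{k_1} ∪ K_{k_2}) ∨ K_k). -/
open scoped Classical

/-- The graph `(K_{k₁} ∪ K_{k₂}) ∨ K_k` on `k + k₁ + k₂` vertices: the first `k`
vertices are joined to everything, and the remaining vertices split into two
cliques of sizes `k₁` and `k₂` with no edges between them. -/
def joinTwoCliques (k k₁ k₂ : ℕ) : SimpleGraph (Fin (k + k₁ + k₂)) where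
  Adj i j := i ≠ j ∧
    ¬((k ≤ (i : ℕ) ∧ (i : ℕ) < k + k₁ ∧ k + k₁ ≤ (j : ℕ)) ∨
      (k ≤ (j : ℕ) ∧ (j : ℕ) < k + k₁ ∧ k + k₁ ≤ (i : ℕ)))
  symm := by
    constructor
    intro i j ⟨h1, h2⟩
    refine ⟨h1.symm, ?_⟩
    tauto
  loopless := by
    constructor
    intro i hi
    exact hi.1 rfl

noncomputable def jtcW (k a b i : ℕ) : ℕ :=
  if i < k then k + a + b - 1 else if i < k + a then k + a - 1 else k + b - 1

noncomputable def jtcF (k a b i j : ℕ) : ℕ :=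
  if i ≠ j ∧ ¬((k ≤ i ∧ i < k + a ∧ k + a ≤ j) ∨ (k ≤ j ∧ j < k + a ∧ k + a ≤ i))
  then (jtcW k a b i + jtcW k a b j) ^ 2 else 0

lemma adj_jtc (k a b : ℕ) (i j : Fin (k + a + b)) :
    (joinTwoCliques k a b).Adj i j ↔
      ((i : ℕ) ≠ (j : ℕ) ∧
        ¬((k ≤ (i : ℕ) ∧ (i : ℕ) < k + a ∧ k + a ≤ (j : ℕ)) ∨
          (k ≤ (j : ℕ) ∧ (j : ℕ) < k + a ∧ k + a ≤ (i : ℕ)))) := by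
  unfold joinTwoCliques
  simp [Fin.ext_iff]
lemma two_mul_hyperZagreb_s13 {V : Type*} [Fintype V] (G : SimpleGraph V) :
    2 * hyperZagreb G =
      ∑ u : V, ∑ v : V, if G.Adj u v then (G.degree u + G.degree v) ^ 2 else 0 := by
  classical
  set f : V → V → ℕ := fun u v => (G.degree u + G.degree v) ^ 2 with hf
  have hsym : ∀ u v, f u v = f v u := fun u v => by simp [f, add_comm]
  have h1 : ∑ d : G.Dart, f d.fst d.snd = 2 * hyperZagreb G := by
    unfold hyperZagreb
    rw [← Finset.sum_fiberwise_of_maps_to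
      (g := SimpleGraph.Dart.edge) (t := G.edgeFinset)
      (fun d _ => by rw [SimpleGraph.mem_edgeFinset]; exact d.edge_mem)
      (fun d => f d.fst d.snd), Finset.mul_sum]
    refine Finset.sum_congr rfl fun e he => ?_
    induction e with
    | _ v w =>
      have hadj : G.Adj v w := SimpleGraph.mem_edgeFinset.mp he
      let d : G.Dart := ⟨(v, w), hadj⟩
      have hfib : (Finset.univ.filter fun d' : G.Dart => d'.edge = s(v, w)) = {d, d.symm} :=
        d.edge_fiber
      rw [hfib, Finset.sum_pair d.symm_ne.symm]
      simp only [Sym2.lift_mk]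
      show f v w + f w v = 2 * f v w
      rw [hsym w v, two_mul]
  rw [← h1]
  have h2 : ∀ u : V, ∑ v : V, (if G.Adj u v then f u v else 0)
      = ∑ v ∈ Finset.univ.filter (G.Adj u), f u v := by
    intro u; rw [Finset.sum_filter]
  simp only [show ∀ u : V, (∑ v : V, if G.Adj u v then (G.degree u + G.degree v) ^ 2 else 0) = ∑ v ∈ Finset.univ.filter (G.Adj u), f u v from h2]
  rw [Finset.sum_sigma']
  refine (Finset.sum_bij' (fun d _ => ⟨d.fst, d.snd⟩)
    (fun p hp => ⟨(p.1, p.2), by simpa using (Finset.mem_sigma.mp hp).2⟩)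
    ?_ ?_ ?_ ?_ ?_)
  · intro d _; simp [d.adj]
  · intro p hp; simp
  · intro d _; rfl
  · intro p hp; rfl
  · intro d _; rfl

lemma card_filter_fin (n : ℕ) (P : Fin n → Prop) (t : Finset ℕ)
    (h : ∀ j : Fin n, P j ↔ (j : ℕ) ∈ t) (ht : ∀ m ∈ t, m < n) :
    (Finset.univ.filter P).card = t.card := by
  classical
  refine Finset.card_bij (fun j _ => (j : ℕ)) ?_ ?_ ?_
  · intro j hj
    simp only [Finset.mem_filter, Finset.mem_univ, true_and] at hj
    exact (h j).mp hj
  · intro x hx y hy hxy; exact Fin.ext hxy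
  · intro m hm
    refine ⟨⟨m, ht m hm⟩, ?_, rfl⟩
    simp only [Finset.mem_filter, Finset.mem_univ, true_and]
    exact (h ⟨m, ht m hm⟩).mpr hm

lemma degree_jtc (k a b : ℕ) (i : Fin (k + a + b)) :
    (joinTwoCliques k a b).degree i =
      if (i : ℕ) < k then k + a + b - 1
      else if (i : ℕ) < k + a then k + a - 1
      else k + b - 1 := by
  classical
  have hdeg : (joinTwoCliques k a b).degree i
      = (Finset.univ.filter ((joinTwoCliques k a b).Adj i)).card := by
    rw [← SimpleGraph.neighborFinset_eq_filter]
    rfl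
  rw [hdeg]
  have hmem : ∀ j : Fin (k + a + b), _ := fun j => adj_jtc k a b i j
  rcases lt_or_ge (i : ℕ) k with hik | hik
  · rw [if_pos hik,
      card_filter_fin (k + a + b) _ ((Finset.range (k + a + b)).erase (i : ℕ))
        (fun j => by rw [hmem j]; simp only [Finset.mem_erase, Finset.mem_range]; omega)
        (fun m hm => by simp only [Finset.mem_erase, Finset.mem_range] at hm; omega),
      Finset.card_erase_of_mem (by simp only [Finset.mem_erase, Finset.mem_range]; omega), Finset.card_range]
  · rcases lt_or_ge (i : ℕ) (k + a) with hia | hia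
    · rw [if_neg (by omega), if_pos hia,
        card_filter_fin (k + a + b) _ ((Finset.range (k + a)).erase (i : ℕ))
          (fun j => by rw [hmem j]; simp only [Finset.mem_erase, Finset.mem_range]; omega)
          (fun m hm => by simp only [Finset.mem_erase, Finset.mem_range] at hm; omega),
        Finset.card_erase_of_mem (by simp [hia]), Finset.card_range]
    · rw [if_neg (by omega), if_neg (by omega),
        card_filter_fin (k + a + b) _
          (((Finset.range k) ∪ (Finset.Ico (k + a) (k + a + b))).erase (i : ℕ))
          (fun j => by
            rw [hmem j]
            simp only [Finset.mem_erase, Finset.mem_union, Finset.mem_range, Finset.mem_Ico]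
            omega)
          (fun m hm => by
            simp only [Finset.mem_erase, Finset.mem_union, Finset.mem_range,
              Finset.mem_Ico] at hm
            omega),
        Finset.card_erase_of_mem (by
          simp only [Finset.mem_erase, Finset.mem_union, Finset.mem_range, Finset.mem_Ico]
          omega),
        Finset.card_union_of_disjoint (by
          simp only [Finset.disjoint_left, Finset.mem_range, Finset.mem_Ico]
          omega),
        Finset.card_range, Nat.card_Ico]
      omega

lemma const_block {g : ℕ → ℕ → ℕ} {l1 u1 l2 u2 c : ℕ}
    (hg : ∀ i ∈ Finset.Ico l1 u1, ∀ j ∈ Finset.Ico l2 u2, g i j = c) :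
    ∑ i ∈ Finset.Ico l1 u1, ∑ j ∈ Finset.Ico l2 u2, g i j = (u1 - l1) * ((u2 - l2) * c) := by
  have h1 : ∀ i ∈ Finset.Ico l1 u1, ∑ j ∈ Finset.Ico l2 u2, g i j = (u2 - l2) * c := by
    intro i hi
    rw [Finset.sum_congr rfl (hg i hi), Finset.sum_const, Nat.card_Ico, smul_eq_mul]
  rw [Finset.sum_congr rfl h1, Finset.sum_const, Nat.card_Ico, smul_eq_mul]

lemma diag_block {g : ℕ → ℕ → ℕ} {l u c : ℕ}
    (hg : ∀ i ∈ Finset.Ico l u, ∀ j ∈ Finset.Ico l u, g i j = if i ≠ j then c else 0) :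
    ∑ i ∈ Finset.Ico l u, ∑ j ∈ Finset.Ico l u, g i j = (u - l) * ((u - l - 1) * c) := by
  have h1 : ∀ i ∈ Finset.Ico l u, ∑ j ∈ Finset.Ico l u, g i j = (u - l - 1) * c := by
    intro i hi
    rw [Finset.sum_congr rfl (hg i hi), ← Finset.insert_erase hi,
      Finset.sum_insert (Finset.notMem_erase _ _), if_neg (by simp)]
    have h2 : ∀ j ∈ (Finset.Ico l u).erase i, (if i ≠ j then c else 0) = c := by
      intro j hj
      rw [if_pos (Ne.symm (Finset.ne_of_mem_erase hj))]
    rw [Finset.sum_congr rfl h2, Finset.sum_const, Finset.card_erase_of_mem hi,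
      Nat.card_Ico, smul_eq_mul, zero_add]
  rw [Finset.sum_congr rfl h1, Finset.sum_const, Nat.card_Ico, smul_eq_mul]

lemma hz_formula (k a b : ℕ) :
    2 * hyperZagreb (joinTwoCliques (k + 1) (a + 1) (b + 1)) =
      (k + 1) * k * (2 * (k + a + b) + 4) ^ 2
      + (a + 1) * a * (2 * (k + a) + 2) ^ 2
      + (b + 1) * b * (2 * (k + b) + 2) ^ 2
      + 2 * ((k + 1) * (a + 1)) * (2 * k + 2 * a + b + 3) ^ 2
      + 2 * ((k + 1) * (b + 1)) * (2 * k + a + 2 * b + 3) ^ 2 := by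
  classical
  rw [two_mul_hyperZagreb_s13]
  have key : ∀ u v : Fin (k + 1 + (a + 1) + (b + 1)),
      (if (joinTwoCliques (k + 1) (a + 1) (b + 1)).Adj u v
        then ((joinTwoCliques (k + 1) (a + 1) (b + 1)).degree u
          + (joinTwoCliques (k + 1) (a + 1) (b + 1)).degree v) ^ 2 else 0)
      = jtcF (k + 1) (a + 1) (b + 1) (u : ℕ) (v : ℕ) := by
    intro u v
    rw [degree_jtc, degree_jtc]
    unfold jtcF jtcW
    by_cases h : ((u : ℕ) ≠ (v : ℕ) ∧
        ¬((k + 1 ≤ (u : ℕ) ∧ (u : ℕ) < k + 1 + (a + 1) ∧ k + 1 + (a + 1) ≤ (v : ℕ)) ∨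
          (k + 1 ≤ (v : ℕ) ∧ (v : ℕ) < k + 1 + (a + 1) ∧ k + 1 + (a + 1) ≤ (u : ℕ))))
    · rw [if_pos ((adj_jtc _ _ _ u v).mpr h), if_pos h]
    · rw [if_neg (fun hh => h ((adj_jtc _ _ _ u v).mp hh)), if_neg h]
  simp only [key]
  have hinner : ∀ m : ℕ, ∑ v : Fin (k + 1 + (a + 1) + (b + 1)),
      jtcF (k + 1) (a + 1) (b + 1) m (v : ℕ)
      = ∑ j ∈ Finset.range (k + 1 + (a + 1) + (b + 1)), jtcF (k + 1) (a + 1) (b + 1) m j :=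
    fun m => Fin.sum_univ_eq_sum_range _ _
  simp only [hinner]
  rw [Fin.sum_univ_eq_sum_range
    (fun i => ∑ j ∈ Finset.range (k + 1 + (a + 1) + (b + 1)), jtcF (k + 1) (a + 1) (b + 1) i j)]
  have hsplit : ∀ g : ℕ → ℕ, ∑ i ∈ Finset.range (k + 1 + (a + 1) + (b + 1)), g i =
      ∑ i ∈ Finset.Ico 0 (k + 1), g i
      + ∑ i ∈ Finset.Ico (k + 1) (k + 1 + (a + 1)), g i
      + ∑ i ∈ Finset.Ico (k + 1 + (a + 1)) (k + 1 + (a + 1) + (b + 1)), g i := by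
    intro g
    rw [Finset.range_eq_Ico,
      ← Finset.sum_Ico_consecutive g (Nat.zero_le (k + 1 + (a + 1))) (by omega),
      ← Finset.sum_Ico_consecutive g (Nat.zero_le (k + 1)) (by omega)]
  simp only [hsplit]
  simp only [Finset.sum_add_distrib]
  have hAA : ∑ i ∈ Finset.Ico 0 (k + 1), ∑ j ∈ Finset.Ico 0 (k + 1),
      jtcF (k + 1) (a + 1) (b + 1) i j
      = (k + 1 - 0) * ((k + 1 - 0 - 1) * (2 * (k + a + b) + 4) ^ 2) :=
    diag_block (fun i hi j hj => by
      simp only [Finset.mem_Ico] at hi hj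
      unfold jtcF jtcW
      split_ifs <;> first | rfl | omega | (exfalso; omega) | (congr 1; omega))
  have hBB : ∑ i ∈ Finset.Ico (k + 1) (k + 1 + (a + 1)), ∑ j ∈ Finset.Ico (k + 1) (k + 1 + (a + 1)),
      jtcF (k + 1) (a + 1) (b + 1) i j
      = (k + 1 + (a + 1) - (k + 1)) * ((k + 1 + (a + 1) - (k + 1) - 1) * (2 * (k + a) + 2) ^ 2) :=
    diag_block (fun i hi j hj => by
      simp only [Finset.mem_Ico] at hi hj
      unfold jtcF jtcW
      split_ifs <;> first | rfl | omega | (exfalso; omega) | (congr 1; omega))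
  have hCC : ∑ i ∈ Finset.Ico (k + 1 + (a + 1)) (k + 1 + (a + 1) + (b + 1)),
      ∑ j ∈ Finset.Ico (k + 1 + (a + 1)) (k + 1 + (a + 1) + (b + 1)),
      jtcF (k + 1) (a + 1) (b + 1) i j
      = (k + 1 + (a + 1) + (b + 1) - (k + 1 + (a + 1)))
        * ((k + 1 + (a + 1) + (b + 1) - (k + 1 + (a + 1)) - 1) * (2 * (k + b) + 2) ^ 2) :=
    diag_block (fun i hi j hj => by
      simp only [Finset.mem_Ico] at hi hj
      unfold jtcF jtcW
      split_ifs <;> first | rfl | omega | (exfalso; omega) | (congr 1; omega))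
  have hAB : ∑ i ∈ Finset.Ico 0 (k + 1), ∑ j ∈ Finset.Ico (k + 1) (k + 1 + (a + 1)),
      jtcF (k + 1) (a + 1) (b + 1) i j
      = (k + 1 - 0) * ((k + 1 + (a + 1) - (k + 1)) * (2 * k + 2 * a + b + 3) ^ 2) :=
    const_block (fun i hi j hj => by
      simp only [Finset.mem_Ico] at hi hj
      unfold jtcF jtcW
      split_ifs <;> first | rfl | omega | (exfalso; omega) | (congr 1; omega))
  have hBA : ∑ i ∈ Finset.Ico (k + 1) (k + 1 + (a + 1)), ∑ j ∈ Finset.Ico 0 (k + 1),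
      jtcF (k + 1) (a + 1) (b + 1) i j
      = (k + 1 + (a + 1) - (k + 1)) * ((k + 1 - 0) * (2 * k + 2 * a + b + 3) ^ 2) :=
    const_block (fun i hi j hj => by
      simp only [Finset.mem_Ico] at hi hj
      unfold jtcF jtcW
      split_ifs <;> first | rfl | omega | (exfalso; omega) | (congr 1; omega))
  have hAC : ∑ i ∈ Finset.Ico 0 (k + 1),
      ∑ j ∈ Finset.Ico (k + 1 + (a + 1)) (k + 1 + (a + 1) + (b + 1)),
      jtcF (k + 1) (a + 1) (b + 1) i j
      = (k + 1 - 0) * ((k + 1 + (a + 1) + (b + 1) - (k + 1 + (a + 1)))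
          * (2 * k + a + 2 * b + 3) ^ 2) :=
    const_block (fun i hi j hj => by
      simp only [Finset.mem_Ico] at hi hj
      unfold jtcF jtcW
      split_ifs <;> first | rfl | omega | (exfalso; omega) | (congr 1; omega))
  have hCA : ∑ i ∈ Finset.Ico (k + 1 + (a + 1)) (k + 1 + (a + 1) + (b + 1)),
      ∑ j ∈ Finset.Ico 0 (k + 1), jtcF (k + 1) (a + 1) (b + 1) i j
      = (k + 1 + (a + 1) + (b + 1) - (k + 1 + (a + 1)))
        * ((k + 1 - 0) * (2 * k + a + 2 * b + 3) ^ 2) :=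
    const_block (fun i hi j hj => by
      simp only [Finset.mem_Ico] at hi hj
      unfold jtcF jtcW
      split_ifs <;> first | rfl | omega | (exfalso; omega) | (congr 1; omega))
  have hBC : ∑ i ∈ Finset.Ico (k + 1) (k + 1 + (a + 1)),
      ∑ j ∈ Finset.Ico (k + 1 + (a + 1)) (k + 1 + (a + 1) + (b + 1)),
      jtcF (k + 1) (a + 1) (b + 1) i j
      = (k + 1 + (a + 1) - (k + 1))
        * ((k + 1 + (a + 1) + (b + 1) - (k + 1 + (a + 1))) * 0) :=
    const_block (fun i hi j hj => by
      simp only [Finset.mem_Ico] at hi hj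
      unfold jtcF jtcW
      split_ifs <;> first | rfl | omega | (exfalso; omega) | (congr 1; omega))
  have hCB : ∑ i ∈ Finset.Ico (k + 1 + (a + 1)) (k + 1 + (a + 1) + (b + 1)),
      ∑ j ∈ Finset.Ico (k + 1) (k + 1 + (a + 1)), jtcF (k + 1) (a + 1) (b + 1) i j
      = (k + 1 + (a + 1) + (b + 1) - (k + 1 + (a + 1)))
        * ((k + 1 + (a + 1) - (k + 1)) * 0) :=
    const_block (fun i hi j hj => by
      simp only [Finset.mem_Ico] at hi hj
      unfold jtcF jtcW
      split_ifs <;> first | rfl | omega | (exfalso; omega) | (congr 1; omega))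
  rw [hAA, hAB, hAC, hBA, hBB, hBC, hCA, hCB, hCC]
  simp only [Nat.sub_zero, Nat.add_sub_cancel, Nat.add_sub_cancel_left]
  ring

set_option maxHeartbeats 1000000 in
/-- For `k ≥ 1` and `2 ≤ k₁ ≤ k₂`, balancing the two cliques towards the
extreme split strictly increases the hyper-Zagreb index:
`HM((K_{k₁-1} ∪ K_{k₂+1}) ∨ K_k) > HM((K_{k₁} ∪ K_{k₂}) ∨ K_k)`. -/
theorem hyperZagreb_joinTwoCliques_shift (k k₁ k₂ : ℕ) (hk : 1 ≤ k)
    (hk₁ : 2 ≤ k₁) (hk₂ : k₁ ≤ k₂) :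
    hyperZagreb (joinTwoCliques k k₁ k₂) <
      hyperZagreb (joinTwoCliques k (k₁ - 1) (k₂ + 1)) := by
  obtain ⟨c, rfl⟩ : ∃ c, k = c + 1 := ⟨k - 1, by omega⟩
  obtain ⟨d, rfl⟩ : ∃ d, k₁ = d + 1 + 1 := ⟨k₁ - 2, by omega⟩
  obtain ⟨e, rfl⟩ : ∃ e, k₂ = d + 1 + e + 1 := ⟨k₂ - (d + 1 + 1), by omega⟩
  show hyperZagreb (joinTwoCliques (c + 1) (d + 1 + 1) (d + 1 + e + 1)) <
      hyperZagreb (joinTwoCliques (c + 1) (d + 1) (d + 1 + e + 1 + 1))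
  have h1 := hz_formula c (d + 1) (d + 1 + e)
  have h2 := hz_formula c d (d + 1 + e + 1)
  have hq : (c + 1) * c * (2 * (c + d + (d + 1 + e + 1)) + 4) ^ 2 + (d + 1) * d * (2 * (c + d) + 2) ^ 2 + ((d + 1 + e + 1) + 1) * (d + 1 + e + 1) * (2 * (c + (d + 1 + e + 1)) + 2) ^ 2 + 2 * ((c + 1) * (d + 1)) * (2 * c + 2 * d + (d + 1 + e + 1) + 3) ^ 2 + 2 * ((c + 1) * ((d + 1 + e + 1) + 1)) * (2 * c + d + 2 * (d + 1 + e + 1) + 3) ^ 2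
      = ((c + 1) * c * (2 * (c + (d + 1) + (d + 1 + e)) + 4) ^ 2 + ((d + 1) + 1) * (d + 1) * (2 * (c + (d + 1)) + 2) ^ 2 + ((d + 1 + e) + 1) * (d + 1 + e) * (2 * (c + (d + 1 + e)) + 2) ^ 2 + 2 * ((c + 1) * ((d + 1) + 1)) * (2 * c + 2 * (d + 1) + (d + 1 + e) + 3) ^ 2 + 2 * ((c + 1) * ((d + 1 + e) + 1)) * (2 * c + (d + 1) + 2 * (d + 1 + e) + 3) ^ 2)
      + (208 + (314 * e + 122 * e ^ 2 + 16 * e ^ 3 + 196 * d + 244 * d * e + 48 * d * e ^ 2 + 48 * d ^ 2 + 48 * d ^ 2 * e + 152 * c + 190 * c * e + 38 * c * e ^ 2 + 76 * c * d + 76 * c * d * e + 24 * c ^ 2 + 24 * c ^ 2 * e)) := by ring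
  have key : 2 * hyperZagreb (joinTwoCliques (c + 1) (d + 1 + 1) (d + 1 + e + 1))
      < 2 * hyperZagreb (joinTwoCliques (c + 1) (d + 1) (d + 1 + e + 1 + 1)) := by
    rw [h1, h2, hq]
    exact Nat.lt_add_of_pos_right (Nat.lt_of_lt_of_le (by norm_num) (Nat.le_add_right 208 _))
  exact Nat.lt_of_mul_lt_mul_left key
end

section
/- For fixed n ≥ 3, the function h(y) = 2y(y-1)(n-1)^2 + 2(n-y-1)(n-y-2)(n-2)^2 + y(n-y-1)(2n-3)^2 + y(n+y-1)^2 is strictly increasing on the interval 1 ≤ y ≤ n-2 (its derivative h'(y) is positive there). -/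
/-- For fixed `n ≥ 3`, the polynomial
`h(y) = 2y(y-1)(n-1)² + 2(n-y-1)(n-y-2)(n-2)² + y(n-y-1)(2n-3)² + y(n+y-1)²`
is strictly increasing on the interval `1 ≤ y ≤ n - 2`. -/
theorem strictMonoOn_hm_connectivity_poly (n : ℕ) (hn : 3 ≤ n) :
    StrictMonoOn
      (fun y : ℝ =>
        2 * y * (y - 1) * ((n : ℝ) - 1) ^ 2 +
          2 * ((n : ℝ) - y - 1) * ((n : ℝ) - y - 2) * ((n : ℝ) - 2) ^ 2 +
          y * ((n : ℝ) - y - 1) * (2 * (n : ℝ) - 3) ^ 2 + y * ((n : ℝ) + y - 1) ^ 2)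
      (Set.Icc 1 ((n : ℝ) - 2)) := by
  have hn' : (3 : ℝ) ≤ (n : ℝ) := by exact_mod_cast hn
  intro a ha b hb hab
  simp only
  obtain ⟨ha1, ha2⟩ := ha
  obtain ⟨hb1, hb2⟩ := hb
  have hQ : 0 < (a^2+a*b+b^2) + (2*(n:ℝ)-1)*(a+b) + (5*(n:ℝ)^2-17*(n:ℝ)+14) := by
    nlinarith [mul_nonneg (sub_nonneg.mpr ha1) (sub_nonneg.mpr hb1)]
  have hd : 0 < b - a := sub_pos.mpr hab
  nlinarith [mul_pos hd hQ]
end
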